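/- arXiv:2011.14348 — 6 statements merged into one kernel-verified Lean document; each statement's English description precedes it below -/
import Mathlib

section
/- Let a and b be integers such that f(x) = x^6 + a x + b is irreducible over ℚ, and let θ be a root of f. Then the discriminant of the ℚ-basis (1, θ, θ^2, θ^3, θ^4, θ^5) of K = ℚ(θ) (equivalently, the discriminant of the polynomial f) equals 5^5·a^6 − 6^6·b^5. -/
/-!
By `Algebra.discr_powerBasis_eq_norm` the discriminant of the power basis of a root `θ` of
`f = Xⁿ + aX + b` is `±N(f'(θ))`. Multiplying by `θ` and using `f(θ) = 0` turns `f'(θ)` into a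
linear expression: `θ f'(θ) = (1 - n) a θ - n b`. The norm of `r - θ` is `f(r)`, since `f` is the
characteristic polynomial of multiplication by `θ`, so the norm of any `cθ + d` is an explicit
polynomial in `a, b, c, d`. Dividing by `N(θ) = (-1)ⁿ b` gives
`N(f'(θ)) = nⁿ bⁿ⁻¹ + (1 - n)ⁿ⁻¹ aⁿ`, and for `n = 6` the sign `(-1) ^ 15` yields `5⁵a⁶ - 6⁶b⁵`.
-/

open Polynomial

namespace PowerBasis

section CommRing

variable {R S : Type*} [CommRing R] [Ring S] [Algebra R S]

theorem norm_algebraMap_sub_gen (pb : PowerBasis R S) (r : R) :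
    Algebra.norm R (algebraMap R S r - pb.gen) = (minpoly R pb.gen).eval r := by
  rw [Algebra.norm_eq_matrix_det pb.basis, map_sub, AlgHom.commutes, ← charpoly_leftMulMatrix,
    Matrix.eval_charpoly, Matrix.algebraMap_eq_diagonal]
  rfl

end CommRing

section Trinomial

variable {K L : Type*} [Field K] [Field L] [Algebra K L] (pb : PowerBasis K L)
  {n : ℕ} {a b : K}

theorem dim_eq_of_minpoly_eq_trinomial (hn : 2 ≤ n)
    (hf : minpoly K pb.gen = X ^ n + C a * X + C b) : pb.dim = n := by
  rw [← pb.natDegree_minpoly, hf]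
  compute_degree! <;> first | omega | simp [show n ≠ 1 by omega, show n ≠ 0 by omega]

theorem norm_gen_of_minpoly_eq_trinomial (hn : 2 ≤ n)
    (hf : minpoly K pb.gen = X ^ n + C a * X + C b) :
    Algebra.norm K pb.gen = (-1) ^ n * b := by
  rw [Algebra.PowerBasis.norm_gen_eq_coeff_zero_minpoly, dim_eq_of_minpoly_eq_trinomial pb hn hf,
    hf]
  simp [coeff_X_pow, (show n ≠ 0 by omega).symm]

theorem norm_algebraMap_mul_gen_add_of_minpoly_eq_trinomial (hn : 2 ≤ n)
    (hf : minpoly K pb.gen = X ^ n + C a * X + C b) (c d : K) :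
    Algebra.norm K (algebraMap K L c * pb.gen + algebraMap K L d) =
      d ^ n + a * d * (-c) ^ (n - 1) + b * (-c) ^ n := by
  have hrank : Module.finrank K L = n := pb.finrank.trans (dim_eq_of_minpoly_eq_trinomial pb hn hf)
  obtain ⟨m, rfl⟩ : ∃ m, n = m + 1 := ⟨n - 1, by omega⟩
  rcases eq_or_ne c 0 with rfl | hc
  · simp [Algebra.norm_algebraMap, hrank, show m ≠ 0 by omega]
  obtain ⟨r, rfl⟩ : ∃ r, d = -c * r := ⟨d / -c, by field_simp⟩
  have hfactor : algebraMap K L c * pb.gen + algebraMap K L (-c * r) =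
      algebraMap K L (-c) * (algebraMap K L r - pb.gen) := by
    simp only [map_mul, map_neg]; ring
  rw [hfactor, map_mul, Algebra.norm_algebraMap, hrank, norm_algebraMap_sub_gen, hf]
  simp only [eval_add, eval_pow, eval_X, eval_mul, eval_C, Nat.add_sub_cancel]
  ring

theorem norm_aeval_derivative_minpoly_of_minpoly_eq_trinomial (hn : 2 ≤ n)
    (hf : minpoly K pb.gen = X ^ n + C a * X + C b) :
    Algebra.norm K (aeval pb.gen (minpoly K pb.gen).derivative) =
      n ^ n * b ^ (n - 1) + (1 - n) ^ (n - 1) * a ^ n := by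
  have := pb.finite
  have hroot : pb.gen ^ n + algebraMap K L a * pb.gen + algebraMap K L b = 0 := by
    simpa [hf, Algebra.smul_def] using minpoly.aeval K pb.gen
  have hgen : pb.gen ≠ 0 := by
    intro h
    have hdeg := pb.natDegree_minpoly
    rw [h, minpoly.zero, natDegree_X, dim_eq_of_minpoly_eq_trinomial pb hn hf] at hdeg
    omega
  have hmul : pb.gen * aeval pb.gen (minpoly K pb.gen).derivative =
      algebraMap K L ((1 - n) * a) * pb.gen + algebraMap K L (-n * b) := by
    obtain ⟨m, rfl⟩ : ∃ m, n = m + 1 := ⟨n - 1, by omega⟩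
    rw [hf]
    simp only [derivative_X_pow_succ, derivative_mul, derivative_C, derivative_X,
      zero_mul, mul_one, zero_add, add_zero, map_add, map_mul, map_pow, map_natCast, map_one, map_sub,
      map_neg, aeval_X, aeval_C, Nat.cast_add, Nat.cast_one]
    linear_combination (m + 1 : L) * hroot
  apply mul_left_cancel₀ (Algebra.norm_ne_zero_iff.mpr hgen)
  rw [← map_mul, hmul, norm_algebraMap_mul_gen_add_of_minpoly_eq_trinomial pb hn hf,
    norm_gen_of_minpoly_eq_trinomial pb hn hf]
  obtain ⟨m, rfl⟩ : ∃ m, n = m + 2 := ⟨n - 2, by omega⟩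
  rw [show m + 2 - 1 = m + 1 from rfl]
  generalize ((m + 2 : ℕ) : K) = N
  have hsq : ((-1 : K) ^ m) * (-1) ^ m = 1 := by rw [← mul_pow]; simp
  rw [show -((1 - N) * a) = (N - 1) * a by ring, show 1 - N = -1 * (N - 1) by ring,
    show -N * b = -1 * (N * b) by ring]
  simp only [mul_pow]
  linear_combination (b * a ^ (m + 2) * (N - 1) ^ (m + 1)) * hsq

theorem discr_pow_gen_of_minpoly_eq_trinomial [Algebra.IsSeparable K L] (hn : 2 ≤ n)
    (hf : minpoly K pb.gen = X ^ n + C a * X + C b) :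
    Algebra.discr K (fun i : Fin n => pb.gen ^ (i : ℕ)) =
      (-1) ^ (n * (n - 1) / 2) * (n ^ n * b ^ (n - 1) + (1 - n) ^ (n - 1) * a ^ n) := by
  rw [← norm_aeval_derivative_minpoly_of_minpoly_eq_trinomial pb hn hf]
  obtain rfl := dim_eq_of_minpoly_eq_trinomial pb hn hf
  have := pb.finite
  simpa only [pb.finrank, coe_basis] using Algebra.discr_powerBasis_eq_norm K pb

end Trinomial

end PowerBasis

/-- The discriminant of the basis `(1, θ, θ², θ³, θ⁴, θ⁵)` of the sextic field
`K = ℚ(θ)`, where `θ` is a root of the irreducible trinomial `x⁶ + a x + b ∈ ℤ[x]`,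
equals `5⁵ a⁶ − 6⁶ b⁵`. -/
theorem discr_powerBasis_of_sextic_trinomial (a b : ℤ) (K : Type) [Field K] [NumberField K]
    (θ : K)
    (hf : Irreducible ((X : ℚ[X]) ^ 6 + C (a : ℚ) * X + C (b : ℚ)))
    (hroot : θ ^ 6 + (a : K) * θ + (b : K) = 0)
    (hK : IntermediateField.adjoin ℚ {θ} = ⊤) :
    Algebra.discr ℚ (fun i : Fin 6 => θ ^ (i : ℕ)) =
      ((5 ^ 5 * a ^ 6 - 6 ^ 6 * b ^ 5 : ℤ) : ℚ) := by
  have hθ : IsIntegral ℚ θ := .of_finite ℚ θ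
  obtain ⟨pb, rfl⟩ : ∃ pb : PowerBasis ℚ K, pb.gen = θ :=
    ⟨.ofAdjoinEqTop hθ (Algebra.adjoin_eq_top_of_primitive_element hθ.isAlgebraic hK), rfl⟩
  have hmin : minpoly ℚ pb.gen = X ^ 6 + C (a : ℚ) * X + C (b : ℚ) := by
    refine (minpoly.eq_of_irreducible_of_monic hf ?_ (by monicity!)).symm
    simpa using hroot
  rw [pb.discr_pow_gen_of_minpoly_eq_trinomial (by norm_num) hmin]
  push_cast
  ring
end

section
/- Let L = ℚ(ξ) be an algebraic number field of degree n with ξ an algebraic integer, with ring of integers A_L, and assume A_L ≠ ℤ[ξ]. Let p_1, …, p_s be the distinct primes dividing the index [A_L : ℤ[ξ]]. For each r with 1 ≤ r ≤ s, suppose {α_{r,0}, α_{r,1}, …, α_{r,n−1}} is a ℤ_{(p_r)}-basis of the integral closure of ℤ_{(p_r)} in L, where α_{r,0} = 1 and α_{r,i} = (c^{(r)}_{i0} + c^{(r)}_{i1}ξ + ⋯ + c^{(r)}_{i,i−1}ξ^{i−1} + ξ^i)/p_r^{k_{i,r}} with integers c^{(r)}_{ij} and integers 0 ≤ k_{i,r}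 ≤ k_{i+1,r}. Choose integers c_{ij} with c_{ij} ≡ c^{(r)}_{ij} (mod p_r^{k_{i,r}}) for all 1 ≤ r ≤ s, and set t_i = ∏_{r=1}^{s} p_r^{k_{i,r}}. Then {α_0, α_1, …, α_{n−1}} is a ℤ-basis of A_L, where α_0 = 1 and α_i = (c_{i0} + c_{i1}ξ + ⋯ + c_{i,i−1}ξ^{i−1} + ξ^i)/t_i for 1 ≤ i ≤ n−1. -/
/-!
Let `β_i = (c_{i0} + ⋯ + c_{i,i-1} ξ^{i-1} + ξ^i) / t_i`. Integrality is checked one prime at a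
time. At `p_r`, write `t_i = p_r^{k_{i,r}} m` with `p_r ∤ m`: the congruences
`c_{ij} ≡ c^{(r)}_{ij} (mod p_r^{k_{i,r}})` make `m β_i - α_{r,i}` an element of `ℤ[ξ]`, so `β_i`
is `p_r`-integral; at every other prime `t_i` is a unit.

Since `β` is triangular with respect to `1, ξ, …, ξ^{n-1}`, it is a `ℚ`-basis of `L` whose
`ℤ`-span contains `ℤ[ξ]` and every `α_{r,j}`. Hence the `β`-coordinates of an algebraic integer
`x` lie in `ℤ_(q)` for every prime `q`: for `q = p_r` because `x` is a `ℤ_(p_r)`-combination of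
the `α_{r,j}`, and for `q ∤ [A_L : ℤ[ξ]]` because `[A_L : ℤ[ξ]] x ∈ ℤ[ξ]`. A rational number
lying in every `ℤ_(q)` is an integer.
-/

open Polynomial NumberField

/-- An element `x` of a number field `L` is `p`-integral, i.e. it belongs to the
integral closure `S₍ₚ₎` of `ℤ₍ₚ₎` in `L`: it can be written as `α / s` with `α` an
algebraic integer and `s ∈ ℤ ∖ pℤ`. -/
def IsPIntegral (p : ℕ) {L : Type*} [Field L] [Algebra ℚ L] (x : L) : Prop :=
  ∃ s : ℤ, ¬ (p : ℤ) ∣ s ∧ IsIntegral ℤ ((s : L) * x)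

/-- A rational number belongs to the localization `ℤ₍ₚ₎` of `ℤ` at `p`. -/
def MemZLoc (p : ℕ) (q : ℚ) : Prop :=
  ∃ m s : ℤ, ¬ (p : ℤ) ∣ s ∧ q * (s : ℚ) = (m : ℚ)

open Module Submodule Set

theorem memZLoc_iff_not_dvd_den {p : ℕ} (q : ℚ) : MemZLoc p q ↔ ¬ p ∣ q.den := by
  refine ⟨fun ⟨m, s, hs, hq⟩ hpq => hs ?_,
    fun h => ⟨q.num, q.den, by exact_mod_cast h, q.mul_den_eq_num⟩⟩
  have hs0 : (s : ℚ) ≠ 0 := by exact_mod_cast fun h : s = 0 => hs (h ▸ dvd_zero _)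
  have hden : (q.den : ℤ) ∣ s := by
    simpa [Rat.divInt_eq_div, ← hq, hs0] using Rat.den_dvd m s
  exact (Int.natCast_dvd_natCast.mpr hpq).trans hden

def zLocSubring (p : ℕ) (hp : p.Prime) : Subring ℚ where
  carrier := {q | MemZLoc p q}
  mul_mem' {a b} ha hb := by
    simp only [mem_ofPred_eq, memZLoc_iff_not_dvd_den] at *
    exact fun h => (hp.dvd_mul.mp (h.trans (Rat.mul_den_dvd a b))).elim ha hb
  add_mem' {a b} ha hb := by
    simp only [mem_ofPred_eq, memZLoc_iff_not_dvd_den] at *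
    exact fun h => (hp.dvd_mul.mp (h.trans (Rat.add_den_dvd a b))).elim ha hb
  one_mem' := by simpa [memZLoc_iff_not_dvd_den] using hp.ne_one
  zero_mem' := by simpa [memZLoc_iff_not_dvd_den] using hp.ne_one
  neg_mem' {a} ha := by simpa [memZLoc_iff_not_dvd_den] using ha

section Coordinates

variable {ι V : Type*} [AddCommGroup V] [Module ℚ V] (b : Basis ι ℚ V)

theorem mem_span_int_of_forall_memZLoc_repr {x : V}
    (h : ∀ p : ℕ, p.Prime → ∀ i, MemZLoc p (b.repr x i)) : x ∈ span ℤ (range b) := by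
  refine (b.mem_span_iff_repr_mem ℤ x).mpr fun i => ⟨(b.repr x i).num, ?_⟩
  refine Rat.coe_int_num_of_den_eq_one (Nat.eq_one_iff_not_exists_prime_dvd.mpr fun p hp => ?_)
  exact (memZLoc_iff_not_dvd_den _).mp (h p hp i)

theorem memZLoc_repr_of_nsmul_mem_span {p m : ℕ} (hm : ¬ p ∣ m) {x : V}
    (hx : m • x ∈ span ℤ (range b)) (i : ι) : MemZLoc p (b.repr x i) := by
  obtain ⟨z, hz⟩ := (b.mem_span_iff_repr_mem ℤ _).mp hx i
  refine ⟨z, m, by exact_mod_cast hm, ?_⟩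
  simp_all [mul_comm]

theorem memZLoc_repr_sum_smul {p : ℕ} (hp : p.Prime) {κ : Type*} [Fintype κ] {v : κ → V}
    (hv : ∀ j, v j ∈ span ℤ (range b)) {d : κ → ℚ} (hd : ∀ j, MemZLoc p (d j)) (i : ι) :
    MemZLoc p (b.repr (∑ j, d j • v j) i) := by
  change _ ∈ zLocSubring p hp
  simp only [map_sum, map_smul, Finsupp.coe_finsetSum, Finset.sum_apply, Finsupp.smul_apply,
    smul_eq_mul]
  refine sum_mem fun j _ => mul_mem (hd j) ?_
  obtain ⟨z, hz⟩ := (b.mem_span_iff_repr_mem ℤ _).mp (hv j) i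
  rw [← hz]
  exact intCast_mem _ z

end Coordinates

section PIntegral

variable {L : Type*} [Field L] [Algebra ℚ L]

theorem IsIntegral.isPIntegral {p : ℕ} (hp : p.Prime) {x : L} (hx : IsIntegral ℤ x) :
    IsPIntegral p x :=
  ⟨1, by exact_mod_cast hp.not_dvd_one, by simpa using hx⟩

theorem IsPIntegral.of_mul_sub {p : ℕ} (hp : p.Prime) {α β : L} (hα : IsPIntegral p α) {m : ℤ}
    (hm : ¬ (p : ℤ) ∣ m) (hβ : IsIntegral ℤ ((m : L) * β - α)) : IsPIntegral p β := by
  obtain ⟨s, hs, hsα⟩ := hα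
  refine ⟨s * m, (Nat.prime_iff_prime_int.mp hp).not_dvd_mul hs hm, ?_⟩
  have e : ((s * m : ℤ) : L) * β = s * α + s * (m * β - α) := by push_cast; ring
  rw [e]
  exact hsα.add ((isIntegral_intCast s).mul hβ)

/-- The `s : ℤ` with `s * x` integral form an ideal of `ℤ` contained in no `pℤ`. -/
theorem isIntegral_of_forall_isPIntegral {x : L} (h : ∀ p : ℕ, p.Prime → IsPIntegral p x) :
    IsIntegral ℤ x := by
  let I : Ideal ℤ :=
    (Subalgebra.toSubmodule (integralClosure ℤ L)).comap (LinearMap.toSpanSingleton ℤ L x)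
  have hI : ∀ s : ℤ, s ∈ I ↔ IsIntegral ℤ ((s : L) * x) := fun s => by
    simp [I, zsmul_eq_mul, mem_integralClosure_iff]
  obtain ⟨g, hg⟩ := Submodule.IsPrincipal.principal I
  have hg' : ∀ s : ℤ, s ∈ I ↔ g ∣ s := fun s => by
    rw [hg, Ideal.submodule_span_eq, Ideal.mem_span_singleton]
  have hg1 : g.natAbs = 1 := by
    by_contra hg1
    obtain ⟨q, hq, hqg⟩ := Nat.exists_prime_and_dvd hg1
    obtain ⟨s, hs, hsx⟩ := h q hq
    exact hs ((Int.natCast_dvd.mpr hqg).trans ((hg' s).mp ((hI s).mpr hsx)))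
  simpa using (hI 1).mp ((hg' 1).mpr (Int.isUnit_iff_natAbs_eq.mpr hg1).dvd)

end PIntegral

theorem toSubmodule_adjoin_le_of_pow_mem {R A : Type*} [CommRing R] [Ring A] [Algebra R A]
    {x : A} {f : R[X]} (hf : f.Monic) (hfx : aeval x f = 0) {M : Submodule R A}
    (h : ∀ k < f.natDegree, x ^ k ∈ M) : Subalgebra.toSubmodule (Algebra.adjoin R {x}) ≤ M := by
  classical
  rw [← Submodule.span_range_natDegree_eq_adjoin hf hfx, span_le, Finset.coe_image]
  rintro _ ⟨k, hk, rfl⟩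
  exact h k (Finset.mem_range.mp hk)

theorem top_le_of_pow_mem {K L : Type*} [Field K] [Field L] [Algebra K L]
    [FiniteDimensional K L] {ξ : L} (hL : IntermediateField.adjoin K {ξ} = ⊤) {M : Submodule K L}
    (h : ∀ k < finrank K L, ξ ^ k ∈ M) : ⊤ ≤ M := by
  have hξ : IsIntegral K ξ := .of_finite K ξ
  have hadj : Algebra.adjoin K {ξ} = ⊤ := by
    rw [← IntermediateField.adjoin_simple_toSubalgebra_of_isAlgebraic hξ.isAlgebraic, hL,
      IntermediateField.top_toSubalgebra]
  have hdeg : (minpoly K ξ).natDegree = finrank K L := by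
    rw [← IntermediateField.adjoin.finrank hξ, hL, IntermediateField.finrank_top']
  simpa [hadj] using toSubmodule_adjoin_le_of_pow_mem (minpoly.monic hξ) (minpoly.aeval K ξ)
    (M := M) (hdeg ▸ h)

section Triangular

variable {A : Type*} [Ring A]

/-- `ξ ^ i + a (i - 1) * ξ ^ (i - 1) + ⋯ + a 0`: the numerator of `α_i`. -/
def monicComb (ξ : A) (a : ℕ → ℤ) (i : ℕ) : A :=
  ∑ j ∈ Finset.range i, (a j : A) * ξ ^ j + ξ ^ i

theorem monicComb_mem_adjoin (ξ : A) (a : ℕ → ℤ) (i : ℕ) :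
    monicComb ξ a i ∈ Algebra.adjoin ℤ {ξ} := by
  have hξ : ξ ∈ Algebra.adjoin ℤ {ξ} := Algebra.subset_adjoin rfl
  exact add_mem (sum_mem fun j _ => mul_mem (intCast_mem _ _) (pow_mem hξ j)) (pow_mem hξ i)

theorem exists_monicComb_sub_eq_mul (ξ : A) {a b : ℕ → ℤ} {P : ℤ} (h : ∀ j, P ∣ a j - b j)
    (i : ℕ) : ∃ y ∈ Algebra.adjoin ℤ {ξ}, monicComb ξ a i - monicComb ξ b i = P * y := by
  choose e he using h
  have hξ : ξ ∈ Algebra.adjoin ℤ {ξ} := Algebra.subset_adjoin rfl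
  refine ⟨∑ j ∈ Finset.range i, (e j : A) * ξ ^ j,
    sum_mem fun j _ => mul_mem (intCast_mem _ _) (pow_mem hξ j), ?_⟩
  simp only [monicComb, add_sub_add_right_eq_sub, ← Finset.sum_sub_distrib,
    Finset.mul_sum]
  refine Finset.sum_congr rfl fun j _ => ?_
  rw [← sub_mul, ← Int.cast_sub, he, Int.cast_mul, mul_assoc]

theorem pow_mem_span_of_intCast_mul_eq_monicComb {n : ℕ} (ξ : A) {β : Fin n → A}
    {t : Fin n → ℤ} {a : Fin n → ℕ → ℤ} (h : ∀ i, (t i : A) * β i = monicComb ξ (a i) i) :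
    ∀ d < n, ξ ^ d ∈ span ℤ (range β) := by
  intro d
  induction d using Nat.strong_induction_on with
  | _ d ih =>
    intro hd
    have e : ξ ^ d = t ⟨d, hd⟩ • β ⟨d, hd⟩ - ∑ j ∈ Finset.range d, a ⟨d, hd⟩ j • ξ ^ j := by
      simp only [zsmul_eq_mul, h, monicComb]
      abel
    rw [e]
    exact sub_mem (smul_mem _ _ (subset_span ⟨_, rfl⟩))
      (sum_mem fun j hj => smul_mem _ _ (ih j (Finset.mem_range.mp hj) (by simp at hj; omega)))

end Triangular

theorem Nat.Prime.not_dvd_prod_pow {ι : Type*} {s : Finset ι} {p : ι → ℕ}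
    (hp : ∀ r, (p r).Prime) {q : ℕ} (hq : q.Prime) (hs : ∀ r ∈ s, p r ≠ q) (e : ι → ℕ) :
    ¬ q ∣ ∏ r ∈ s, p r ^ e r := by
  intro hd
  obtain ⟨r, hr, hdvd⟩ := (hq.prime.dvd_finsetProd_iff _).mp hd
  exact hs r hr ((Nat.prime_dvd_prime_iff_eq hq (hp r)).mp (hq.dvd_of_dvd_pow hdvd)).symm

section Patching

variable {L : Type*} [Field L] {ι : Type*} [Fintype ι] [DecidableEq ι] {p k : ι → ℕ}

theorem prod_erase_mul_sub_mem_adjoin [CharZero L] (hp : ∀ r, p r ≠ 0) (ξ : L)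
    {a : ι → ℕ → ℤ} {a' : ℕ → ℤ} (ha : ∀ r j, (p r : ℤ) ^ k r ∣ a' j - a r j) (i : ℕ) (r : ι) :
    ((∏ r' ∈ Finset.univ.erase r, p r' ^ k r' : ℕ) : L) *
        (monicComb ξ a' i / ((∏ r', p r' ^ k r' : ℕ) : L)) -
      monicComb ξ (a r) i / (p r : L) ^ k r ∈ Algebra.adjoin ℤ {ξ} := by
  obtain ⟨y, hy, hyeq⟩ := exists_monicComb_sub_eq_mul ξ (ha r) i
  rw [← Finset.mul_prod_erase _ _ (Finset.mem_univ r)]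
  convert hy using 1
  have hpr : (p r : L) ^ k r ≠ 0 := pow_ne_zero _ (Nat.cast_ne_zero.mpr (hp r))
  have hm : ((∏ r' ∈ Finset.univ.erase r, p r' ^ k r' : ℕ) : L) ≠ 0 := by
    simp [Finset.prod_eq_zero_iff, hp]
  push_cast at hyeq hm ⊢
  field_simp
  linear_combination hyeq

theorem monicComb_div_mem_of_adjoin_le [CharZero L] (hp : ∀ r, p r ≠ 0) (ξ : L)
    {a : ι → ℕ → ℤ} {a' : ℕ → ℤ} (ha : ∀ r j, (p r : ℤ) ^ k r ∣ a' j - a r j) (i : ℕ) (r : ι)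
    {M : Submodule ℤ L} (hM : Subalgebra.toSubmodule (Algebra.adjoin ℤ {ξ}) ≤ M)
    (hβ : monicComb ξ a' i / ((∏ r', p r' ^ k r' : ℕ) : L) ∈ M) :
    monicComb ξ (a r) i / (p r : L) ^ k r ∈ M := by
  refine (sub_mem_iff_right M ?_).mp (hM (prod_erase_mul_sub_mem_adjoin hp ξ ha i r))
  rw [← nsmul_eq_mul]
  exact nsmul_mem hβ _

theorem isIntegral_monicComb_div_prod [Algebra ℚ L] {ξ : L} (hξ : IsIntegral ℤ ξ)
    (hp : ∀ r, (p r).Prime) (hinj : Function.Injective p) {a : ι → ℕ → ℤ} {a' : ℕ → ℤ}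
    (ha : ∀ r j, (p r : ℤ) ^ k r ∣ a' j - a r j) (i : ℕ)
    (hα : ∀ r, IsPIntegral (p r) (monicComb ξ (a r) i / (p r : L) ^ k r)) :
    IsIntegral ℤ (monicComb ξ a' i / ((∏ r, p r ^ k r : ℕ) : L)) := by
  have := algebraRat.charZero L
  refine isIntegral_of_forall_isPIntegral fun q hq => ?_
  by_cases hqp : ∃ r, p r = q
  · obtain ⟨r, rfl⟩ := hqp
    refine (hα r).of_mul_sub (hp r) (m := ∏ r' ∈ Finset.univ.erase r, p r' ^ k r') ?_ ?_
    · exact_mod_cast (hp r).not_dvd_prod_pow hp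
        (fun r' hr' => hinj.ne (Finset.ne_of_mem_erase hr')) k
    · exact_mod_cast adjoin_le_integralClosure hξ
        (prod_erase_mul_sub_mem_adjoin (fun r => (hp r).ne_zero) ξ ha i r)
  · refine ⟨((∏ r, p r ^ k r : ℕ) : ℤ), ?_, ?_⟩
    · exact_mod_cast hq.not_dvd_prod_pow hp (fun r _ h => hqp ⟨r, h⟩) k
    · have hprod : ((∏ r, p r ^ k r : ℕ) : L) ≠ 0 := by
        simp [Finset.prod_eq_zero_iff, (hp _).ne_zero]
      rw [Int.cast_natCast, mul_div_cancel₀ _ hprod]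
      exact adjoin_le_integralClosure hξ (monicComb_mem_adjoin ξ a' i)

end Patching

theorem natDegree_minpoly_int_eq_finrank {L : Type*} [Field L] [NumberField L] {ξ : L}
    (hξ : IsIntegral ℤ ξ) (hL : IntermediateField.adjoin ℚ {ξ} = ⊤) :
    (minpoly ℤ ξ).natDegree = finrank ℚ L := by
  rw [← IntermediateField.finrank_top', ← hL, IntermediateField.adjoin.finrank hξ.tower_top,
    minpoly.isIntegrallyClosed_eq_field_fractions' ℚ hξ,
    natDegree_map_eq_of_injective (algebraMap ℤ ℚ).injective_int]

theorem exists_basis_ringOfIntegers_of_mem_span {K : Type*} [Field K] [NumberField K] {ι : Type*}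
    (b : Basis ι ℚ K) (hb : ∀ i, IsIntegral ℤ (b i))
    (hspan : ∀ x : 𝓞 K, (x : K) ∈ span ℤ (range b)) :
    ∃ B : Basis ι ℤ (𝓞 K), ∀ i, (B i : K) = b i := by
  let v : ι → 𝓞 K := fun i => ⟨b i, hb i⟩
  let toK : 𝓞 K →ₗ[ℤ] K := (Algebra.linearMap (𝓞 K) K).restrictScalars ℤ
  have hli : LinearIndependent ℤ v := .of_comp toK (b.linearIndependent.restrict_scalars' ℤ)
  have hsp : ⊤ ≤ span ℤ (range v) := by
    intro x _
    obtain ⟨y, hy, hyx⟩ : (x : K) ∈ (span ℤ (range v)).map toK := by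
      rw [map_span, ← range_comp]
      exact hspan x
    rwa [← RingOfIntegers.coe_injective hyx]
  exact ⟨.mk hli hsp, fun i => by rw [Basis.mk_apply]; rfl⟩

theorem index_nsmul_mem_adjoin {K : Type*} [Field K] [NumberField K] (ξ x : 𝓞 K) :
    (Algebra.adjoin ℤ {ξ}).toSubring.toAddSubgroup.index • (x : K) ∈
      Algebra.adjoin ℤ {(ξ : K)} := by
  let G := (Algebra.adjoin ℤ {ξ}).toSubring.toAddSubgroup
  let f := IsScalarTower.toAlgHom ℤ (𝓞 K) K
  have h : f (G.index • x) ∈ (Algebra.adjoin ℤ {ξ}).map f :=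
    Subalgebra.mem_map.mpr ⟨_, G.nsmul_index_mem x, rfl⟩
  rwa [AlgHom.map_adjoin_singleton, map_nsmul] at h

theorem coe_mem_span_of_forall_memZLoc_repr {K : Type*} [Field K] [NumberField K] {ι : Type*}
    (b : Basis ι ℚ K) (ξ : 𝓞 K)
    (hξ : Subalgebra.toSubmodule (Algebra.adjoin ℤ {(ξ : K)}) ≤ span ℤ (range b))
    (hloc : ∀ q : ℕ, q.Prime → q ∣ (Algebra.adjoin ℤ {ξ}).toSubring.toAddSubgroup.index →
      ∀ (x : 𝓞 K) i, MemZLoc q (b.repr x i))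
    (x : 𝓞 K) : (x : K) ∈ span ℤ (range b) := by
  refine mem_span_int_of_forall_memZLoc_repr b fun q hq i => ?_
  by_cases hdvd : q ∣ (Algebra.adjoin ℤ {ξ}).toSubring.toAddSubgroup.index
  · exact hloc q hq hdvd x i
  · exact memZLoc_repr_of_nsmul_mem_span b hdvd (hξ (index_nsmul_mem_adjoin ξ x)) i

theorem toSubmodule_adjoin_le_span_of_intCast_mul_eq_monicComb {K : Type*} [Field K]
    [NumberField K] {ξ : K} (hξ : IsIntegral ℤ ξ) (hK : IntermediateField.adjoin ℚ {ξ} = ⊤)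
    {n : ℕ} (hdeg : finrank ℚ K = n) {β : Fin n → K} {t : Fin n → ℤ} {a : Fin n → ℕ → ℤ}
    (h : ∀ i, (t i : K) * β i = monicComb ξ (a i) i) :
    Subalgebra.toSubmodule (Algebra.adjoin ℤ {ξ}) ≤ span ℤ (range β) :=
  toSubmodule_adjoin_le_of_pow_mem (minpoly.monic hξ) (minpoly.aeval ℤ ξ) fun d hd =>
    pow_mem_span_of_intCast_mul_eq_monicComb ξ h d
      (by rwa [natDegree_minpoly_int_eq_finrank hξ hK, hdeg] at hd)

theorem top_le_span_of_intCast_mul_eq_monicComb {K : Type*} [Field K] [NumberField K] {ξ : K}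
    (hK : IntermediateField.adjoin ℚ {ξ} = ⊤) {n : ℕ} (hdeg : finrank ℚ K = n) {β : Fin n → K}
    {t : Fin n → ℤ} {a : Fin n → ℕ → ℤ} (h : ∀ i, (t i : K) * β i = monicComb ξ (a i) i) :
    ⊤ ≤ span ℚ (range β) :=
  top_le_of_pow_mem hK fun d hd =>
    span_le_restrictScalars ℤ ℚ _ (pow_mem_span_of_intCast_mul_eq_monicComb ξ h d (hdeg ▸ hd))

theorem integralBasis_of_pIntegralBases_general (n s : ℕ)
    (L : Type) [Field L] [NumberField L] (ξ : 𝓞 L)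
    (hdeg : Module.finrank ℚ L = n)
    (hL : IntermediateField.adjoin ℚ {(ξ : L)} = ⊤)
    (p : Fin s → ℕ) (hp : ∀ r, (p r).Prime) (hinj : Function.Injective p)
    (hdiv : ∀ q : ℕ, q.Prime →
      (q ∣ (Algebra.adjoin ℤ {ξ}).toSubring.toAddSubgroup.index ↔ ∃ r, p r = q))
    (k : Fin s → Fin n → ℕ)
    (c : Fin s → Fin n → ℕ → ℤ)
    (hbasis : ∀ r : Fin s,
      (∀ i : Fin n, IsPIntegral (p r)
        ((∑ j ∈ Finset.range i, (c r i j : L) * (ξ : L) ^ j + (ξ : L) ^ (i : ℕ))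
          / (p r : L) ^ k r i)) ∧
      LinearIndependent ℚ (fun i : Fin n =>
        (∑ j ∈ Finset.range i, (c r i j : L) * (ξ : L) ^ j + (ξ : L) ^ (i : ℕ))
          / (p r : L) ^ k r i) ∧
      (∀ x : L, IsPIntegral (p r) x → ∃ d : Fin n → ℚ,
        (∀ i, MemZLoc (p r) (d i)) ∧
        x = ∑ i : Fin n, d i •
          ((∑ j ∈ Finset.range i, (c r i j : L) * (ξ : L) ^ j + (ξ : L) ^ (i : ℕ))
            / (p r : L) ^ k r i)))
    (c' : Fin n → ℕ → ℤ)
    (hc' : ∀ (r : Fin s) (i : Fin n) (j : ℕ), (p r : ℤ) ^ k r i ∣ c' i j - c r i j)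
    (t : Fin n → ℕ) (ht : ∀ i : Fin n, t i = ∏ r : Fin s, p r ^ k r i) :
    ∃ B : Module.Basis (Fin n) ℤ (𝓞 L), ∀ i : Fin n,
      (B i : L) = (∑ j ∈ Finset.range i, (c' i j : L) * (ξ : L) ^ j + (ξ : L) ^ (i : ℕ))
        / (t i : L) := by
  obtain rfl : t = fun i => ∏ r, p r ^ k r i := funext ht
  have hξ : IsIntegral ℤ (ξ : L) := ξ.isIntegral_coe
  set β : Fin n → L := fun i => monicComb (ξ : L) (c' i) i / ((∏ r, p r ^ k r i : ℕ) : L)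
  have htβ : ∀ i, (((∏ r, p r ^ k r i : ℕ) : ℤ) : L) * β i = monicComb (ξ : L) (c' i) i :=
    fun i => by
      rw [Int.cast_natCast]
      exact mul_div_cancel₀ _ (by simp [Finset.prod_eq_zero_iff, (hp _).ne_zero])
  have hZξ := toSubmodule_adjoin_le_span_of_intCast_mul_eq_monicComb hξ hL hdeg htβ
  let b := basisOfTopLeSpanOfCardEqFinrank β
    (top_le_span_of_intCast_mul_eq_monicComb hL hdeg htβ) (by simp [hdeg])
  have hb : ⇑b = β := coe_basisOfTopLeSpanOfCardEqFinrank _ _ _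
  have hβ : ∀ i, IsIntegral ℤ (β i) := fun i =>
    isIntegral_monicComb_div_prod hξ hp hinj (fun r j => hc' r i j) i fun r => (hbasis r).1 i
  have hα : ∀ r i, monicComb (ξ : L) (c r i) i / (p r : L) ^ k r i ∈ span ℤ (range b) :=
    fun r i => hb ▸ monicComb_div_mem_of_adjoin_le (fun r => (hp r).ne_zero) (ξ : L)
      (fun r j => hc' r i j) i r hZξ (subset_span ⟨i, rfl⟩)
  have hO : ∀ x : 𝓞 L, (x : L) ∈ span ℤ (range b) :=
    coe_mem_span_of_forall_memZLoc_repr b ξ (hb ▸ hZξ) fun q hq hdvd x i => by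
      obtain ⟨r, rfl⟩ := (hdiv q hq).mp hdvd
      obtain ⟨d, hd, hx⟩ := (hbasis r).2.2 x (x.isIntegral_coe.isPIntegral (hp r))
      rw [hx]
      exact memZLoc_repr_sum_smul b (hp r) (hα r) hd i
  obtain ⟨B, hB⟩ := exists_basis_ringOfIntegers_of_mem_span b (hb ▸ hβ) hO
  exact ⟨B, fun i => (hB i).trans (congrFun hb i)⟩

/-- Patching `p_r`-integral bases of the special triangular shape into an integral
basis: if for each prime `p_r` dividing the index `[A_L : ℤ[ξ]]` the elements
`α_{r,i} = (c^{(r)}_{i0} + ⋯ + c^{(r)}_{i,i−1} ξ^{i−1} + ξ^i)/p_r^{k_{i,r}}` form a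
`ℤ₍ₚᵣ₎`-basis of `S₍ₚᵣ₎`, and the integers `c_{ij}` satisfy
`c_{ij} ≡ c^{(r)}_{ij} (mod p_r^{k_{i,r}})` for all `r`, then with
`t_i = ∏_r p_r^{k_{i,r}}`, the elements
`α_i = (c_{i0} + ⋯ + c_{i,i−1} ξ^{i−1} + ξ^i)/t_i` form a `ℤ`-basis of `A_L`. -/
theorem integralBasis_of_pIntegralBases (n s : ℕ) (hn : 0 < n)
    (L : Type) [Field L] [NumberField L] (ξ : 𝓞 L)
    (hdeg : Module.finrank ℚ L = n)
    (hL : IntermediateField.adjoin ℚ {(ξ : L)} = ⊤)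
    (hne : Algebra.adjoin ℤ {ξ} ≠ (⊤ : Subalgebra ℤ (𝓞 L)))
    (p : Fin s → ℕ) (hp : ∀ r, (p r).Prime) (hinj : Function.Injective p)
    (hdiv : ∀ q : ℕ, q.Prime →
      (q ∣ (Algebra.adjoin ℤ {ξ}).toSubring.toAddSubgroup.index ↔ ∃ r, p r = q))
    (k : Fin s → Fin n → ℕ) (hk0 : ∀ r, k r ⟨0, hn⟩ = 0)
    (hkmono : ∀ r, Monotone (k r))
    (c : Fin s → Fin n → ℕ → ℤ)
    (hbasis : ∀ r : Fin s,
      (∀ i : Fin n, IsPIntegral (p r)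
        ((∑ j ∈ Finset.range i, (c r i j : L) * (ξ : L) ^ j + (ξ : L) ^ (i : ℕ))
          / (p r : L) ^ k r i)) ∧
      LinearIndependent ℚ (fun i : Fin n =>
        (∑ j ∈ Finset.range i, (c r i j : L) * (ξ : L) ^ j + (ξ : L) ^ (i : ℕ))
          / (p r : L) ^ k r i) ∧
      (∀ x : L, IsPIntegral (p r) x → ∃ d : Fin n → ℚ,
        (∀ i, MemZLoc (p r) (d i)) ∧
        x = ∑ i : Fin n, d i •
          ((∑ j ∈ Finset.range i, (c r i j : L) * (ξ : L) ^ j + (ξ : L) ^ (i : ℕ))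
            / (p r : L) ^ k r i)))
    (c' : Fin n → ℕ → ℤ)
    (hc' : ∀ (r : Fin s) (i : Fin n) (j : ℕ), (p r : ℤ) ^ k r i ∣ c' i j - c r i j)
    (t : Fin n → ℕ) (ht : ∀ i : Fin n, t i = ∏ r : Fin s, p r ^ k r i) :
    ∃ B : Module.Basis (Fin n) ℤ (𝓞 L), ∀ i : Fin n,
      (B i : L) = (∑ j ∈ Finset.range i, (c' i j : L) * (ξ : L) ^ j + (ξ : L) ^ (i : ℕ))
        / (t i : L) :=
  integralBasis_of_pIntegralBases_general n s L ξ hdeg hL p hp hinj hdiv k c hbasis c' hc' t ht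
end

section
/- Let θ be a root of an irreducible trinomial f(x) = x^6 + a x + b ∈ ℤ[x]. If v_2(b) = 2 and v_2(a) ≥ 3, then the element (θ^3 + 2)·θ^2 / 4 of ℚ(θ) is integral over the localization ℤ_{(2)} of ℤ at the prime 2. -/
/-!
With `a = 8a₁` and `b = 4b₁`, `b₁ = 2m + 1` odd, put `s = θ⁴/2` and `y = (θ³ + 2)θ²/4`.
Since `θ⁶ = -(8a₁θ + 4b₁)`, one gets `s³ = θ¹²/8 = 2(2a₁θ + b₁)²`, so `s` is integral over `ℤ`, and
`y² - θ²y = θ⁴(θ⁶ - 4)/16 = -s(a₁θ + m + 1)`, where the oddness of `b₁` makes `(b₁ + 1)/2` an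
integer. Hence `y` is a root of a monic quadratic with integral coefficients, so it is integral
over `ℤ`, and a fortiori over every ring mapping to `K`, such as `ℤ₍₂₎`.
-/

open Polynomial

theorem isIntegral_of_sq_sub_mul_add_eq_zero {R A : Type*} [CommRing R] [CommRing A] [Algebra R A]
    {x p q : A} (hp : IsIntegral R p) (hq : IsIntegral R q) (h : x ^ 2 - p * x + q = 0) :
    IsIntegral R x :=
  isIntegral_trans (A := integralClosure R A) x
    ⟨X ^ 2 - C ⟨p, hp⟩ * X + C ⟨q, hq⟩, by monicity!, by simpa using h⟩

theorem isIntegral_of_pow_add_mul_add_eq_zero {A : Type*} [Ring A] {θ : A} {n : ℕ} (hn : 1 < n)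
    (a b : ℤ) (h : θ ^ n + a * θ + b = 0) : IsIntegral ℤ θ := by
  refine ⟨X ^ n + (C a * X + C b), monic_X_pow_add ?_, ?_⟩
  · exact (degree_linear_le).trans_lt (by exact_mod_cast hn)
  · rw [eval₂_add, eval₂_add, eval₂_mul_X, eval₂_C, eval₂_C, eval₂_X_pow, ← add_assoc]
    simpa using h

section

variable {K : Type*} [Field K] (h2 : (2 : K) ≠ 0) {θ : K} {a₁ m : ℤ}
  (hθ : θ ^ 6 + 8 * a₁ * θ + 4 * (2 * m + 1) = 0)
include h2 hθ

theorem half_pow_four_pow_three_eq :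
    (θ ^ 4 / 2) ^ 3 = 2 * (2 * a₁ * θ + (2 * m + 1)) ^ 2 := by
  field_simp
  linear_combination (θ ^ 6 - (8 * a₁ * θ + 4 * (2 * m + 1))) * hθ

theorem theta_cubed_add_two_mul_sq_div_four_quadratic :
    ((θ ^ 3 + 2) * θ ^ 2 / 4) ^ 2 - θ ^ 2 * ((θ ^ 3 + 2) * θ ^ 2 / 4) +
      θ ^ 4 / 2 * (a₁ * θ + (m + 1)) = 0 := by
  have h4 : (4 : K) ≠ 0 := by simpa [show (4 : K) = 2 * 2 by norm_num] using h2
  field_simp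
  linear_combination 2 * θ ^ 4 * hθ

theorem isIntegral_theta_cubed_add_two_mul_sq_div_four :
    IsIntegral ℤ ((θ ^ 3 + 2) * θ ^ 2 / 4) := by
  have hθint : IsIntegral ℤ θ :=
    isIntegral_of_pow_add_mul_add_eq_zero (n := 6) (by norm_num) (8 * a₁) (4 * (2 * m + 1))
      (by push_cast; linear_combination hθ)
  have h2int : IsIntegral ℤ (2 : K) := by simpa using isIntegral_natCast (R := ℤ) (B := K) 2
  have hs : IsIntegral ℤ (θ ^ 4 / 2) := by
    refine IsIntegral.of_pow (n := 3) (by norm_num) ?_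
    rw [half_pow_four_pow_three_eq h2 hθ]
    exact h2int.mul ((((h2int.mul (isIntegral_intCast a₁)).mul hθint).add
      ((h2int.mul (isIntegral_intCast m)).add isIntegral_one)).pow 2)
  refine isIntegral_of_sq_sub_mul_add_eq_zero (hθint.pow 2) (hs.mul ?_)
    (theta_cubed_add_two_mul_sq_div_four_quadratic h2 hθ)
  exact ((isIntegral_intCast a₁).mul hθint).add ((isIntegral_intCast m).add isIntegral_one)

end

theorem sextic_trinomial_theta_cubed_add_two_mul_sq_div_four_integral_general
    (a b : ℤ) (K : Type) [Field K] (θ : K)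
    (hroot : θ ^ 6 + (a : K) * θ + (b : K) = 0)
    (hb : (2 ^ 2 : ℤ) ∣ b ∧ ¬ (2 ^ 3 : ℤ) ∣ b) (ha : (2 ^ 3 : ℤ) ∣ a)
    (R : Type) [CommRing R] [Algebra R K] :
    IsIntegral R ((θ ^ 3 + 2) * θ ^ 2 / 4) := by
  suffices IsIntegral ℤ ((θ ^ 3 + 2) * θ ^ 2 / 4) from this.tower_top
  by_cases h2 : (2 : K) = 0
  -- in characteristic 2 the division by `4 = 0` makes the element `0`
  · simp [show (4 : K) = 2 * 2 by norm_num, h2, isIntegral_zero]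
  obtain ⟨b₁, rfl⟩ := hb.1
  obtain ⟨a₁, rfl⟩ := ha
  obtain ⟨m, rfl⟩ : ∃ m, b₁ = 2 * m + 1 := by
    refine ⟨b₁ / 2, ?_⟩
    by_contra h
    exact hb.2 ⟨b₁ / 2, by omega⟩
  have hθ : θ ^ 6 + 8 * a₁ * θ + 4 * (2 * m + 1) = 0 := by
    push_cast at hroot
    linear_combination hroot
  exact isIntegral_theta_cubed_add_two_mul_sq_div_four h2 hθ

/-- Lemma (i): if `v₂(b) = 2` and `v₂(a) ≥ 3`, then `(θ³ + 2)·θ²/4` is integral over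
the localization `ℤ₍₂₎` of `ℤ` at the prime `2` (here `R` is any realization of this
localization, mapping to `K` compatibly with `ℤ`). -/
theorem sextic_trinomial_theta_cubed_add_two_mul_sq_div_four_integral
    (a b : ℤ) (K : Type) [Field K] [NumberField K] (θ : K)
    (hf : Irreducible ((X : ℚ[X]) ^ 6 + C (a : ℚ) * X + C (b : ℚ)))
    (hroot : θ ^ 6 + (a : K) * θ + (b : K) = 0)
    (hK : IntermediateField.adjoin ℚ {θ} = ⊤)
    (hb : (2 ^ 2 : ℤ) ∣ b ∧ ¬ (2 ^ 3 : ℤ) ∣ b) (ha : (2 ^ 3 : ℤ) ∣ a)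
    (R : Type) [CommRing R] [Algebra ℤ R]
    [hpr : (Ideal.span {(2 : ℤ)}).IsPrime]
    [IsLocalization.AtPrime R (Ideal.span {(2 : ℤ)})]
    [Algebra R K] [IsScalarTower ℤ R K] :
    IsIntegral R ((θ ^ 3 + 2) * θ ^ 2 / 4) :=
  sextic_trinomial_theta_cubed_add_two_mul_sq_div_four_integral_general a b K θ hroot hb ha R
end

section
/- Let θ be a root of an irreducible trinomial f(x) = x^6 + a x + b ∈ ℤ[x]. If v_2(a) = v_2(b) = 4 and b/16 ≡ 1 (mod 4), then the element (θ^5 + 4θ^2 + 8θ)/16 of ℚ(θ) is integral over the localization ℤ_{(2)} of ℤ at the prime 2. -/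
open Polynomial NumberField

/-!
Writing `a = 16(2s + 1)` and `b = 16(4t + 1)`, the elements
`1, θ, θ²/2, θ³/4, (θ⁴ + 4θ)/8, α = (θ⁵ + 4θ² + 8θ)/16` span a lattice that multiplication
by `α` maps into itself, with a matrix whose entries are integer polynomials in `s` and `t`.
By Cayley–Hamilton `α` is then integral over `ℤ`, hence over every ring mapping to `K`.
-/

theorem Int.exists_eq_sixteen_mul_odd {a : ℤ} (ha : 2 ^ 4 ∣ a ∧ ¬ 2 ^ 5 ∣ a) :
    ∃ s, a = 16 * (2 * s + 1) :=
  ⟨a / 32, by omega⟩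

theorem Int.exists_eq_sixteen_mul_four_mul_add_one {b : ℤ} (hb : 2 ^ 4 ∣ b)
    (hb16 : b / 16 % 4 = 1) : ∃ t, b = 16 * (4 * t + 1) :=
  ⟨b / 64, by omega⟩

section

variable {K : Type*} [Field K]

def sexticBasis (θ : K) : Fin 6 → K :=
  ![1, θ, θ ^ 2 / 2, θ ^ 3 / 4, (θ ^ 4 + 4 * θ) / 8, (θ ^ 5 + 4 * θ ^ 2 + 8 * θ) / 16]

variable [CharZero K] {θ : K} {s t : ℤ}

theorem sexticBasis_five_mul_mem_span
    (hθ : θ ^ 6 + 16 * (2 * s + 1) * θ + 16 * (4 * t + 1) = 0) (i : Fin 6) :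
    sexticBasis θ 5 * sexticBasis θ i ∈ Submodule.span ℤ (Set.range (sexticBasis θ)) := by
  simp only [Submodule.mem_span_range_iff_exists_fun, Fin.sum_univ_six, zsmul_eq_mul]
  fin_cases i
  · refine ⟨![0, 0, 0, 0, 0, 1], ?_⟩
    simp only [sexticBasis, Matrix.cons_val, Fin.isValue]
    push_cast
    ring
  · refine ⟨![-1 - 4 * t, -1 - 2 * s, 1, 1, 0, 0], ?_⟩
    simp only [sexticBasis, Matrix.cons_val, Fin.isValue]
    push_cast
    linear_combination -hθ / 16
  · refine ⟨![0, -1 - 2 * t, -1 - 2 * s, 1, 1, 0], ?_⟩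
    simp only [sexticBasis, Matrix.cons_val, Fin.isValue]
    push_cast
    linear_combination -θ * hθ / 32
  · refine ⟨![0, -1, -1 - 2 * t, -1 - 2 * s, 1, 1], ?_⟩
    simp only [sexticBasis, Matrix.cons_val, Fin.isValue]
    push_cast
    linear_combination -θ ^ 2 * hθ / 64
  · refine ⟨![-1 - 4 * t, -1 - s, 0, -2 * t, -1 - 2 * s, 1], ?_⟩
    simp only [sexticBasis, Matrix.cons_val, Fin.isValue]
    push_cast
    linear_combination -(θ ^ 3 + 8) * hθ / 128
  · refine ⟨![-1 - 4 * t, -1 - s - t, -s, 1, -2 * t, -1 - 2 * s], ?_⟩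
    simp only [sexticBasis, Matrix.cons_val, Fin.isValue]
    push_cast
    linear_combination -(θ ^ 4 + 8 * θ + 16) * hθ / 256

theorem isIntegral_sexticBasis_five
    (hθ : θ ^ 6 + 16 * (2 * s + 1) * θ + 16 * (4 * t + 1) = 0) :
    IsIntegral ℤ (sexticBasis θ 5) := by
  set N := Submodule.span ℤ (Set.range (sexticBasis θ))
  have hN : N ≠ ⊥ := (Submodule.ne_bot_iff N).2 ⟨1, Submodule.subset_span ⟨0, rfl⟩, one_ne_zero⟩
  refine isIntegral_of_smul_mem_submodule N hN (Submodule.fg_span (Set.finite_range _)) _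
    fun n hn => ?_
  induction hn using Submodule.span_induction with
  | mem x hx =>
    obtain ⟨i, rfl⟩ := hx
    exact sexticBasis_five_mul_mem_span hθ i
  | zero => simp
  | add x y _ _ hx hy => rw [smul_add]; exact N.add_mem hx hy
  | smul c x _ hx => rw [smul_comm]; exact N.smul_mem c hx

end

theorem IsIntegral.of_int {R B : Type*} [CommRing R] [Ring B] [Algebra R B] {x : B}
    (hx : IsIntegral ℤ x) : IsIntegral R x :=
  hx.tower_top

theorem sextic_trinomial_theta5_integral_over_Z2_general
    (a b : ℤ) (K : Type) [Field K] [NumberField K] (θ : K)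
    (hroot : θ ^ 6 + (a : K) * θ + (b : K) = 0)
    (ha : (2 ^ 4 : ℤ) ∣ a ∧ ¬ (2 ^ 5 : ℤ) ∣ a)
    (hb : (2 ^ 4 : ℤ) ∣ b ∧ ¬ (2 ^ 5 : ℤ) ∣ b)
    (hb16 : (b / 16) % 4 = 1)
    (R : Type) [CommRing R]
    [Algebra R K] :
    IsIntegral R ((θ ^ 5 + 4 * θ ^ 2 + 8 * θ) / 16) := by
  obtain ⟨s, rfl⟩ := Int.exists_eq_sixteen_mul_odd ha
  obtain ⟨t, rfl⟩ := Int.exists_eq_sixteen_mul_four_mul_add_one hb.1 hb16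
  push_cast at hroot
  exact (isIntegral_sexticBasis_five hroot).of_int

/-- Lemma (iv): if `v₂(a) = v₂(b) = 4` and `b/16 ≡ 1 (mod 4)`, then
`(θ⁵ + 4θ² + 8θ)/16` is integral over the localization `ℤ₍₂₎` of `ℤ` at the
prime `2`. -/
theorem sextic_trinomial_theta5_integral_over_Z2
    (a b : ℤ) (K : Type) [Field K] [NumberField K] (θ : K)
    (hf : Irreducible ((X : ℚ[X]) ^ 6 + C (a : ℚ) * X + C (b : ℚ)))
    (hroot : θ ^ 6 + (a : K) * θ + (b : K) = 0)
    (hK : IntermediateField.adjoin ℚ {θ} = ⊤)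
    (ha : (2 ^ 4 : ℤ) ∣ a ∧ ¬ (2 ^ 5 : ℤ) ∣ a)
    (hb : (2 ^ 4 : ℤ) ∣ b ∧ ¬ (2 ^ 5 : ℤ) ∣ b)
    (hb16 : (b / 16) % 4 = 1)
    (R : Type) [CommRing R] [Algebra ℤ R]
    [hpr : (Ideal.span {(2 : ℤ)}).IsPrime]
    [IsLocalization.AtPrime R (Ideal.span {(2 : ℤ)})]
    [Algebra R K] [IsScalarTower ℤ R K] :
    IsIntegral R ((θ ^ 5 + 4 * θ ^ 2 + 8 * θ) / 16) :=
  sextic_trinomial_theta5_integral_over_Z2_general a b K θ hroot ha hb hb16 R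
end

section
/- Let θ be a root of an irreducible trinomial f(x) = x^6 + a x + b ∈ ℤ[x]. If v_2(b) = 4, v_2(a) ≥ 6 and b/16 ≡ 3 (mod 4), then the element (θ^3 + 4)/8 of ℚ(θ) is integral over the localization ℤ_{(2)} of ℤ at the prime 2. -/
/-!
Write `a = 64 d` and `b = 16 (4 e - 1)`, and put `y = (θ³ + 4) / 8`. Dividing `θ⁶ + a θ + b = 0`
by `64` gives `y² - y + e = -d θ`; cubing, and using `θ³ = 8 y - 4`, shows that `y` is a root of
the monic integer sextic `(Y² - Y + e)³ + 8 d³ Y - 4 d³`. So `y` is integral over `ℤ`, hence over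
any ring `R` with an algebra map to `K`.
-/

open Polynomial

noncomputable def shiftedCubeSextic (d e : ℤ) : ℤ[X] :=
  (X ^ 2 - X + C e) ^ 3 + C (8 * d ^ 3) * X - C (4 * d ^ 3)

theorem shiftedCubeSextic_monic (d e : ℤ) : (shiftedCubeSextic d e).Monic := by
  unfold shiftedCubeSextic
  monicity!

theorem aeval_shiftedCubeSextic_eq_zero {S : Type*} [CommRing S] {d e : ℤ} {y t : S}
    (hy : y ^ 2 - y + e = -d * t) (ht : t ^ 3 = 8 * y - 4) :
    aeval y (shiftedCubeSextic d e) = 0 := by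
  simp only [shiftedCubeSextic, map_sub, map_add, map_pow, map_mul, aeval_X, eq_intCast,
    map_intCast, map_ofNat]
  rw [hy]
  linear_combination -(d : S) ^ 3 * ht

theorem sq_sub_self_add_eq_of_sextic_root {K : Type*} [Field K] [CharZero K] {d e : ℤ} {θ : K}
    (hθ : θ ^ 6 + (64 * d : ℤ) * θ + (16 * (4 * e - 1) : ℤ) = 0) :
    ((θ ^ 3 + 4) / 8) ^ 2 - (θ ^ 3 + 4) / 8 + e = -d * θ := by
  push_cast at hθ
  linear_combination (1 / 64 : K) * hθ

theorem sextic_trinomial_theta3_add_four_div_eight_integral_over_Z2_general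
    (a b : ℤ) (K : Type) [Field K] [NumberField K] (θ : K)
    (hroot : θ ^ 6 + (a : K) * θ + (b : K) = 0)
    (hb : (2 ^ 4 : ℤ) ∣ b ∧ ¬ (2 ^ 5 : ℤ) ∣ b)
    (ha : (2 ^ 6 : ℤ) ∣ a)
    (hb16 : (b / 16) % 4 = 3)
    (R : Type) [CommRing R]
    [Algebra R K] :
    IsIntegral R ((θ ^ 3 + 4) / 8) := by
  obtain ⟨c, rfl⟩ := hb.1
  obtain ⟨d, rfl⟩ := ha
  obtain ⟨e, rfl⟩ : ∃ e : ℤ, c = 4 * e - 1 := ⟨(c + 1) / 4, by omega⟩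
  have hy := sq_sub_self_add_eq_of_sextic_root (d := d) (e := e) (θ := θ) (by simpa using hroot)
  have hint : IsIntegral ℤ ((θ ^ 3 + 4) / 8) :=
    ⟨shiftedCubeSextic d e, shiftedCubeSextic_monic d e,
      aeval_shiftedCubeSextic_eq_zero hy (by ring)⟩
  exact hint.tower_top

/-- Lemma (vi): if `v₂(b) = 4`, `v₂(a) ≥ 6` and `b/16 ≡ 3 (mod 4)`, then
`(θ³ + 4)/8` is integral over the localization `ℤ₍₂₎` of `ℤ` at the prime `2`. -/
theorem sextic_trinomial_theta3_add_four_div_eight_integral_over_Z2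
    (a b : ℤ) (K : Type) [Field K] [NumberField K] (θ : K)
    (hf : Irreducible ((X : ℚ[X]) ^ 6 + C (a : ℚ) * X + C (b : ℚ)))
    (hroot : θ ^ 6 + (a : K) * θ + (b : K) = 0)
    (hK : IntermediateField.adjoin ℚ {θ} = ⊤)
    (hb : (2 ^ 4 : ℤ) ∣ b ∧ ¬ (2 ^ 5 : ℤ) ∣ b)
    (ha : (2 ^ 6 : ℤ) ∣ a)
    (hb16 : (b / 16) % 4 = 3)
    (R : Type) [CommRing R] [Algebra ℤ R]
    [hpr : (Ideal.span {(2 : ℤ)}).IsPrime]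
    [IsLocalization.AtPrime R (Ideal.span {(2 : ℤ)})]
    [Algebra R K] [IsScalarTower ℤ R K] :
    IsIntegral R ((θ ^ 3 + 4) / 8) :=
  sextic_trinomial_theta3_add_four_div_eight_integral_over_Z2_general a b K θ hroot hb ha hb16 R
end

section
/- Let K = ℚ(θ) where θ is a root of an irreducible trinomial f(x) = x^6 + a x + b ∈ ℤ[x], and let p > 5 be a prime dividing neither a nor b. Then there do not exist integers x, y, z, v such that (x + yθ + zθ^2 + vθ^3 + θ^4)/p is an algebraic integer. -/
/-!
Let `f = X⁶ + aX + b` and `g = X⁴ + vX³ + zX² + yX + x`, and write `f̄, ḡ` for their reductions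
mod `p`. If `g(θ)/p` is integral, then `g(θ)` lies in every prime of `𝓞 K` above `p`. Since `f` is
the minimal polynomial of `θ`, lying over for the integral extension `ℤ[X]/(f) → 𝓞 K` provides,
for every irreducible factor `q` of `f̄`, a prime above `p` at which `θ` reduces to a root of `q`;
hence `rad f̄ ∣ ḡ`. On the other hand `f̄ / rad f̄` divides `f̄` and `f̄'`, hence also
`6 f̄ - X f̄' = 5aX + 6b`, which has degree exactly one because `p ∤ 5a`. So `f̄ ∣ ḡ (5aX + 6b)`,
which is impossible as `6 > 4 + 1`.
-/

open Polynomial NumberField UniqueFactorizationMonoid EuclideanDomain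

namespace UniqueFactorizationMonoid

theorem radical_dvd_of_forall_prime_dvd {M : Type*} [CommMonoidWithZero M]
    [NormalizationMonoid M] [UniqueFactorizationMonoid M] {a b : M} (hb : b ≠ 0)
    (h : ∀ q, Prime q → q ∣ a → q ∣ b) : radical a ∣ b := by
  rw [radical_dvd_iff_primeFactors_subset hb]
  intro q hq
  rw [mem_primeFactors] at hq ⊢
  have hq_prime := prime_of_normalized_factor q hq
  exact (mem_normalizedFactors_iff' hb).2 ⟨hq_prime.irreducible,
    normalize_normalized_factor q hq, h q hq_prime (dvd_of_mem_normalizedFactors hq)⟩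

end UniqueFactorizationMonoid

namespace Polynomial

section Trinomial

variable {k : Type*} [Field k]

theorem C_mul_sub_X_mul_derivative_trinomial (n : ℕ) (a b : k) :
    C ((n : k) + 1) * (X ^ (n + 1) + C a * X + C b) -
      X * derivative (X ^ (n + 1) + C a * X + C b) = C (n * a) * X + C ((n + 1) * b) := by
  simp only [derivative_add, derivative_X_pow, derivative_mul, derivative_C, derivative_X]
  simp only [map_mul, map_add, map_natCast, map_one, Nat.cast_add, Nat.cast_one,
    add_tsub_cancel_right]
  ring

theorem natDegree_trinomial {n : ℕ} (hn : 2 ≤ n) (a b : k) :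
    (X ^ n + C a * X + C b).natDegree = n := by
  rw [add_assoc, natDegree_add_eq_left_of_natDegree_lt] <;> rw [natDegree_X_pow]
  exact natDegree_linear_le.trans_lt hn

theorem natDegree_le_of_forall_prime_dvd_trinomial (n : ℕ) (a b : k) (ha : ((n : k) - 1) * a ≠ 0)
    {g : k[X]} (hg : g ≠ 0) (h : ∀ q, Prime q → q ∣ X ^ n + C a * X + C b → q ∣ g) :
    n ≤ g.natDegree + 1 := by
  classical
  rcases Nat.lt_or_ge n 2 with hn | hn
  · omega
  obtain ⟨m, rfl⟩ : ∃ m, n = m + 1 := ⟨n - 1, by omega⟩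
  set f : k[X] := X ^ (m + 1) + C a * X + C b
  set L : k[X] := C (m * a) * X + C ((m + 1) * b)
  have hL : divRadical f ∣ L := by
    rw [← show C ((m : k) + 1) * f - X * derivative f = L from
      C_mul_sub_X_mul_derivative_trinomial m a b]
    exact dvd_sub (dvd_mul_of_dvd_right (divRadical_dvd_self f) _)
      (dvd_mul_of_dvd_right (divRadical_dvd_derivative f) _)
  have hfL : f ∣ g * L :=
    radical_mul_divRadical (a := f) ▸ mul_dvd_mul (radical_dvd_of_forall_prime_dvd hg h) hL
  have hL0 : L ≠ 0 := by
    have hcoeff : L.coeff 1 = m * a := by simp [L, coeff_C, coeff_one]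
    push_cast [add_sub_cancel_right] at ha
    exact fun hL0 => ha (by rw [← hcoeff, hL0, coeff_zero])
  calc m + 1 = f.natDegree := (natDegree_trinomial hn a b).symm
    _ ≤ (g * L).natDegree := natDegree_le_of_dvd hfL (mul_ne_zero hg hL0)
    _ = g.natDegree + L.natDegree := natDegree_mul hg hL0
    _ ≤ g.natDegree + 1 := by gcongr; exact natDegree_linear_le

end Trinomial

theorem dvd_of_aeval_eq_zero_of_irreducible_map {R F A : Type*} [CommRing R] [Field F] [Ring A]
    [Nontrivial A] [Algebra R F] [Algebra R A] [Algebra F A] [IsScalarTower R F A]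
    (hinj : Function.Injective (algebraMap R F)) {f h : R[X]} (hmo : f.Monic)
    (hirr : Irreducible (f.map (algebraMap R F))) {θ : A} (hf : aeval θ f = 0)
    (hh : aeval θ h = 0) : f ∣ h := by
  have hmin : minpoly F θ = f.map (algebraMap R F) :=
    (minpoly.eq_of_irreducible_of_monic hirr (by rwa [aeval_map_algebraMap]) (hmo.map _)).symm
  rw [← map_dvd_map _ hinj hmo, ← hmin]
  exact minpoly.dvd F θ (by rwa [aeval_map_algebraMap])

theorem mem_of_aeval_mem_map_of_ker_le {R S : Type*} [CommRing R] [CommRing S] [Algebra R S]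
    [Algebra.IsIntegral R S] (θ : S) {P : Ideal R[X]} [P.IsPrime]
    (hker : RingHom.ker (aeval θ) ≤ P) {I : Ideal R} (hI : I.map (C : R →+* R[X]) ≤ P) {g : R[X]}
    (hg : aeval θ g ∈ I.map (algebraMap R S)) : g ∈ P := by
  let : Algebra R[X] S := (aeval θ).toRingHom.toAlgebra
  have : IsScalarTower R R[X] S := IsScalarTower.of_algebraMap_eq fun r => (aeval_C θ r).symm
  have : Algebra.IsIntegral R[X] S := Algebra.IsIntegral.tower_top R
  obtain ⟨Q, -, -, hQP⟩ := Ideal.exists_ideal_over_prime_of_isIntegral P (⊥ : Ideal S)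
    (by rwa [← RingHom.ker_eq_comap_bot])
  have hIQ : I.map (algebraMap R S) ≤ Q := by
    rw [Ideal.map_le_iff_le_comap, IsScalarTower.algebraMap_eq R R[X] S, ← Ideal.comap_comap,
      hQP, ← Ideal.map_le_iff_le_comap]
    exact hI
  rw [← hQP]
  exact hIQ hg

theorem dvd_map_of_aeval_mem_map_ker {R S k : Type*} [CommRing R] [CommRing S] [Algebra R S]
    [Algebra.IsIntegral R S] [CommRing k] (π : R →+* k) {θ : S} {f : R[X]}
    (hf : ∀ h : R[X], aeval θ h = 0 → f ∣ h) {q : k[X]} (hq : Prime q) (hqf : q ∣ f.map π)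
    {g : R[X]} (hg : aeval θ g ∈ (RingHom.ker π).map (algebraMap R S)) : q ∣ g.map π := by
  have := AdjoinRoot.isDomain_of_prime hq
  let φ : R[X] →+* AdjoinRoot q := (AdjoinRoot.mk q).comp (mapRingHom π)
  have hφ (h : R[X]) : h ∈ RingHom.ker φ ↔ q ∣ h.map π := AdjoinRoot.mk_eq_zero
  rw [← hφ]
  have : (RingHom.ker φ).IsPrime := RingHom.ker_isPrime φ
  refine mem_of_aeval_mem_map_of_ker_le θ (fun h hh => ?_) ?_ hg
  · obtain ⟨c, rfl⟩ := hf h hh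
    exact Ideal.mul_mem_right _ _ ((hφ f).2 hqf)
  · rw [Ideal.map_le_iff_le_comap]
    intro r hr
    simp [φ, RingHom.mem_ker.1 hr]

theorem dvd_map_of_isIntegral_aeval_div {K : Type*} [Field K] {p : ℕ} (hp : (p : K) ≠ 0)
    {θ : K} (hθ : IsIntegral ℤ θ) {f : ℤ[X]} (hf : ∀ h : ℤ[X], aeval θ h = 0 → f ∣ h)
    {g : ℤ[X]} (hg : IsIntegral ℤ (aeval θ g / p)) {q : (ZMod p)[X]} (hq : Prime q)
    (hqf : q ∣ f.map (Int.castRingHom (ZMod p))) : q ∣ g.map (Int.castRingHom (ZMod p)) := by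
  let θ' : 𝓞 K := ⟨θ, hθ⟩
  let α : 𝓞 K := ⟨_, hg⟩
  have hθ' : algebraMap (𝓞 K) K θ' = θ := rfl
  refine dvd_map_of_aeval_mem_map_ker _ (θ := θ') (fun h hh => hf h ?_) hq hqf ?_
  · rw [← hθ', aeval_algebraMap_apply, hh, map_zero]
  · have hgθ : aeval θ' g = algebraMap ℤ (𝓞 K) p * α := by
      apply RingOfIntegers.coe_injective
      rw [← aeval_algebraMap_apply, map_mul, hθ', ← IsScalarTower.algebraMap_apply,
        algebraMap_int_eq, eq_intCast, Int.cast_natCast]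
      exact (mul_div_cancel₀ _ hp).symm
    rw [hgθ]
    exact Ideal.mul_mem_right _ _ (Ideal.mem_map_of_mem _ (by simp))

end Polynomial

theorem sextic_trinomial_no_p_integral_quartic_general (a b : ℤ) (K : Type) [Field K]
    [NumberField K] (θ : K)
    (hf : Irreducible ((X : ℚ[X]) ^ 6 + C (a : ℚ) * X + C (b : ℚ)))
    (hroot : θ ^ 6 + (a : K) * θ + (b : K) = 0)
    (p : ℕ) (hp : p.Prime) (hp5 : 5 < p)
    (hpa : ¬ (p : ℤ) ∣ a) :
    ¬ ∃ x y z v : ℤ,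
      IsIntegral ℤ (((x : K) + (y : K) * θ + (z : K) * θ ^ 2 + (v : K) * θ ^ 3 + θ ^ 4)
        / (p : K)) := by
  have : Fact p.Prime := ⟨hp⟩
  rintro ⟨x, y, z, v, hα⟩
  set f : ℤ[X] := X ^ 6 + C a * X + C b
  set g : ℤ[X] := X ^ 4 + C v * X ^ 3 + C z * X ^ 2 + C y * X + C x
  have hf_monic : f.Monic := by unfold f; monicity!
  have hfθ : aeval θ f = 0 := by simpa [f] using hroot
  have hf_dvd (h : ℤ[X]) : aeval θ h = 0 → f ∣ h :=
    dvd_of_aeval_eq_zero_of_irreducible_map (F := ℚ) (RingHom.injective_int _) hf_monic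
      (by simpa [f] using hf) hfθ
  have hg_integral : IsIntegral ℤ (aeval θ g / p) := by convert hα using 2; simp [g]; ring
  have h5a : (((6 : ℕ) : ZMod p) - 1) * (a : ZMod p) ≠ 0 := by
    have h5 : ((5 : ℕ) : ZMod p) ≠ 0 := by
      rw [Ne, ZMod.natCast_eq_zero_iff]
      exact Nat.not_dvd_of_pos_of_lt (by norm_num) hp5
    have ha : (a : ZMod p) ≠ 0 := by rwa [Ne, ZMod.intCast_zmod_eq_zero_iff_dvd]
    rw [show ((6 : ℕ) : ZMod p) - 1 = ((5 : ℕ) : ZMod p) by push_cast; ring]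
    exact mul_ne_zero h5 ha
  have hg_monic : (g.map (Int.castRingHom (ZMod p))).Monic := by simp [g]; monicity!
  have hg_deg : (g.map (Int.castRingHom (ZMod p))).natDegree = 4 := by simp [g]; compute_degree!
  have := natDegree_le_of_forall_prime_dvd_trinomial 6 _ (b : ZMod p) h5a hg_monic.ne_zero
    fun q hq hqf => dvd_map_of_isIntegral_aeval_div (by exact_mod_cast hp.ne_zero)
      ⟨f, hf_monic, by rwa [← aeval_def]⟩ hf_dvd hg_integral hq (by simpa [f] using hqf)
  omega

/-- If `p > 5` is a prime dividing neither `a` nor `b`, then there are no integers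
`x, y, z, v` such that `(x + yθ + zθ² + vθ³ + θ⁴)/p` is an algebraic integer. -/
theorem sextic_trinomial_no_p_integral_quartic (a b : ℤ) (K : Type) [Field K]
    [NumberField K] (θ : K)
    (hf : Irreducible ((X : ℚ[X]) ^ 6 + C (a : ℚ) * X + C (b : ℚ)))
    (hroot : θ ^ 6 + (a : K) * θ + (b : K) = 0)
    (hK : IntermediateField.adjoin ℚ {θ} = ⊤)
    (p : ℕ) (hp : p.Prime) (hp5 : 5 < p)
    (hpa : ¬ (p : ℤ) ∣ a) (hpb : ¬ (p : ℤ) ∣ b) :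
    ¬ ∃ x y z v : ℤ,
      IsIntegral ℤ (((x : K) + (y : K) * θ + (z : K) * θ ^ 2 + (v : K) * θ ^ 3 + θ ^ 4)
        / (p : K)) :=
  sextic_trinomial_no_p_integral_quartic_general a b K θ hf hroot p hp hp5 hpa
end
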